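/- Soundness of saturation implies solution extraction: assume every answer clause in the initial set from Λ = ⟨Σ_c, ∀x̄∃y. F[x̄,y]⟩ is valid and every inference rule preserves validity of answer clauses. If the saturation derives the answer clause □ ◦ ⟨p[ᾱ]⟩ (empty clause with answer p[ᾱ]), then ∀x̄. F[x̄, p[x̄]] is valid, i.e., p[x̄] is a solution for Λ. -/

import Mathlib

/-- First-order terms over function symbols `F` and variables `V`. -/
inductive Term (F V : Type) : Type where
  | var : V → Term F V
  | app : F → List (Term F V) → Term F V

/-- An interpretation: a nonempty domain together with interpretations of the
function symbols. -/
structure Interp (F : Type) where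
  D : Type
  default : D
  fn : F → List D → D

/-- Evaluation of a term in an interpretation under a variable assignment. -/
def evalT {F V : Type} (I : Interp F) (v : V → I.D) : Term F V → I.D
  | Term.var x => v x
  | Term.app f ts => I.fn f (ts.attach.map fun t => evalT I v t.1)
decreasing_by
  have := List.sizeOf_lt_of_mem t.2
  simp only [Term.app.sizeOf_spec] at *
  omega

/-- An equational literal: a sign (`true` = equation, `false` = disequation)
together with the two sides. -/
abbrev Lit (F V : Type) := Bool × Term F V × Term F V

/-- A clause: a finite disjunction (list) of literals. -/
abbrev Clause (F V : Type) := List (Lit F V)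

/-- Truth of a literal in `I` under assignment `v`. -/
def litSat {F V : Type} (I : Interp F) (v : V → I.D) (l : Lit F V) : Prop :=
  if l.1 then evalT I v l.2.1 = evalT I v l.2.2
  else evalT I v l.2.1 ≠ evalT I v l.2.2

/-- Truth of a clause in `I` under assignment `v`: some literal is true. -/
def clauseSat {F V : Type} (I : Interp F) (v : V → I.D) (C : Clause F V) : Prop :=
  ∃ l ∈ C, litSat I v l

/-- First-order formulas with equality. -/
inductive Fml (F V : Type) : Type where
  | eq : Term F V → Term F V → Fml F V
  | not : Fml F V → Fml F V
  | and : Fml F V → Fml F V → Fml F V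
  | or : Fml F V → Fml F V → Fml F V
  | imp : Fml F V → Fml F V → Fml F V
  | all : V → Fml F V → Fml F V
  | ex : V → Fml F V → Fml F V

/-- Tarskian satisfaction of a formula. -/
def Sat {F V : Type} [DecidableEq V] (I : Interp F) : (V → I.D) → Fml F V → Prop
  | v, Fml.eq s t => evalT I v s = evalT I v t
  | v, Fml.not φ => ¬ Sat I v φ
  | v, Fml.and φ ψ => Sat I v φ ∧ Sat I v ψ
  | v, Fml.or φ ψ => Sat I v φ ∨ Sat I v ψ
  | v, Fml.imp φ ψ => Sat I v φ → Sat I v ψ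
  | v, Fml.all x φ => ∀ d : I.D, Sat I (Function.update v x d) φ
  | v, Fml.ex x φ => ∃ d : I.D, Sat I (Function.update v x d) φ

/-- Applying a substitution to a term. -/
def applySubst {F V : Type} (σ : V → Term F V) : Term F V → Term F V
  | Term.var x => σ x
  | Term.app f ts => Term.app f (ts.attach.map fun t => applySubst σ t.1)
decreasing_by
  have := List.sizeOf_lt_of_mem t.2
  simp only [Term.app.sizeOf_spec] at *
  omega

/-- Applying a substitution to a literal. -/
def applyLit {F V : Type} (σ : V → Term F V) (l : Lit F V) : Lit F V :=
  (l.1, applySubst σ l.2.1, applySubst σ l.2.2)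

/-- Applying a substitution to a clause. -/
def applyClause {F V : Type} (σ : V → Term F V) (C : Clause F V) : Clause F V :=
  C.map (applyLit σ)

/-- The variable `x` occurs in the term. -/
inductive VarInT {F V : Type} (x : V) : Term F V → Prop where
  | here : VarInT x (Term.var x)
  | arg {f : F} {ts : List (Term F V)} {t : Term F V} :
      t ∈ ts → VarInT x t → VarInT x (Term.app f ts)

/-- The variable `x` occurs in the literal. -/
def VarInLit {F V : Type} (x : V) (l : Lit F V) : Prop :=
  VarInT x l.2.1 ∨ VarInT x l.2.2

/-- The variable `x` occurs in the clause. -/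
def VarInClause {F V : Type} (x : V) (C : Clause F V) : Prop :=
  ∃ l ∈ C, VarInLit x l

/-- The variable `x` occurs in the formula (free or bound). -/
def VarInFml {F V : Type} (x : V) : Fml F V → Prop
  | Fml.eq s t => VarInT x s ∨ VarInT x t
  | Fml.not φ => VarInFml x φ
  | Fml.and φ ψ => VarInFml x φ ∨ VarInFml x ψ
  | Fml.or φ ψ => VarInFml x φ ∨ VarInFml x ψ
  | Fml.imp φ ψ => VarInFml x φ ∨ VarInFml x ψ
  | Fml.all z φ => x = z ∨ VarInFml x φ
  | Fml.ex z φ => x = z ∨ VarInFml x φ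

/-- Program terms: terms together with the conditional constructor
`ite(l ≈ r, p, q)`. -/
inductive PTerm (F V : Type) : Type where
  | t : Term F V → PTerm F V
  | ite : Term F V → Term F V → PTerm F V → PTerm F V → PTerm F V

open Classical in
/-- Evaluation of a program term. -/
noncomputable def evalP {F V : Type} (I : Interp F) (v : V → I.D) : PTerm F V → I.D
  | PTerm.t u => evalT I v u
  | PTerm.ite l r p q =>
      if evalT I v l = evalT I v r then evalP I v p else evalP I v q

/-- Applying a substitution to a formula (naive substitution; under a binder
the bound variable is not substituted). -/
def applyFml {F V : Type} [DecidableEq V] (σ : V → Term F V) : Fml F V → Fml F V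
  | Fml.eq s t => Fml.eq (applySubst σ s) (applySubst σ t)
  | Fml.not φ => Fml.not (applyFml σ φ)
  | Fml.and φ ψ => Fml.and (applyFml σ φ) (applyFml σ ψ)
  | Fml.or φ ψ => Fml.or (applyFml σ φ) (applyFml σ ψ)
  | Fml.imp φ ψ => Fml.imp (applyFml σ φ) (applyFml σ ψ)
  | Fml.all x φ => Fml.all x (applyFml (Function.update σ x (Term.var x)) φ)
  | Fml.ex x φ => Fml.ex x (applyFml (Function.update σ x (Term.var x)) φ)

/-- The substitution `x̄ ↦ ᾱ` determined by a list of pairs `(xᵢ, αᵢ)`: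
each variable `xᵢ` is mapped to the constant term `αᵢ`. -/
def substOfPairs {F V : Type} [DecidableEq V] (ps : List (V × F)) (x : V) :
    Term F V :=
  match ps.find? (fun q => decide (q.1 = x)) with
  | some q => Term.app q.2 []
  | none => Term.var x

/-- Replacing each Skolem constant `αᵢ` back by the variable `xᵢ` in a term. -/
def unskolemT {F V : Type} [DecidableEq F] (ps : List (V × F)) :
    Term F V → Term F V
  | Term.var z => Term.var z
  | Term.app f [] =>
      match ps.find? (fun q => decide (q.2 = f)) with
      | some q => Term.var q.1
      | none => Term.app f []
  | Term.app f ts => Term.app f (ts.attach.map fun t => unskolemT ps t.1)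
decreasing_by
  have := List.sizeOf_lt_of_mem t.2
  simp only [Term.app.sizeOf_spec] at *
  omega

/-- Replacing each Skolem constant `αᵢ` back by `xᵢ` in a program term. -/
def unskolemP {F V : Type} [DecidableEq F] (ps : List (V × F)) :
    PTerm F V → PTerm F V
  | PTerm.t u => PTerm.t (unskolemT ps u)
  | PTerm.ite l r p q =>
      PTerm.ite (unskolemT ps l) (unskolemT ps r) (unskolemP ps p) (unskolemP ps q)

/-- The function symbol `a` occurs in the term. -/
inductive SymInT {F V : Type} (a : F) : Term F V → Prop where
  | here {ts : List (Term F V)} : SymInT a (Term.app a ts)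
  | arg {f : F} {ts : List (Term F V)} {t : Term F V} :
      t ∈ ts → SymInT a t → SymInT a (Term.app f ts)

/-- The function symbol `a` occurs in the formula. -/
def SymInFml {F V : Type} (a : F) : Fml F V → Prop
  | Fml.eq s t => SymInT a s ∨ SymInT a t
  | Fml.not φ => SymInFml a φ
  | Fml.and φ ψ => SymInFml a φ ∨ SymInFml a ψ
  | Fml.or φ ψ => SymInFml a φ ∨ SymInFml a ψ
  | Fml.imp φ ψ => SymInFml a φ ∨ SymInFml a ψ
  | Fml.all _ φ => SymInFml a φ
  | Fml.ex _ φ => SymInFml a φ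

/-- An answer clause `C ◦ ⟨p⟩`. -/
abbrev AnsClause (F V : Type) := Clause F V × PTerm F V

/-- Validity of an answer clause w.r.t. `Fm = F[ᾱ, y]` with answer variable
`y`: the universal closure of `C ∨ F[ᾱ, p]` holds in every interpretation. -/
def ValidA {F V : Type} [DecidableEq V] (Fm : Fml F V) (y : V)
    (A : AnsClause F V) : Prop :=
  ∀ (I : Interp F) (v : V → I.D),
    clauseSat I v A.1 ∨ Sat I (Function.update v y (evalP I v A.2)) Fm

/-- Derivability by saturation from the initial set `S0` using the inference
system `Inf`. -/
inductive Derives {F V : Type} (S0 : Set (AnsClause F V))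
    (Inf : List (AnsClause F V) → AnsClause F V → Prop) : AnsClause F V → Prop where
  | base {a : AnsClause F V} : a ∈ S0 → Derives S0 Inf a
  | step {prems : List (AnsClause F V)} {c : AnsClause F V} :
      (∀ a ∈ prems, Derives S0 Inf a) → Inf prems c → Derives S0 Inf c


section AuxLemmas

variable {F V : Type}

theorem evalT_app (I : Interp F) (v : V → I.D) (f : F) (ts : List (Term F V)) :
    evalT I v (Term.app f ts) = I.fn f (ts.map (evalT I v)) := by
  rw [evalT]; simp

theorem applySubst_app (σ : V → Term F V) (f : F) (ts : List (Term F V)) :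
    applySubst σ (Term.app f ts) = Term.app f (ts.map (applySubst σ)) := by
  rw [applySubst]; simp

theorem evalT_congr (I : Interp F) :
    ∀ (t : Term F V) (v₁ v₂ : V → I.D),
      (∀ x, VarInT x t → v₁ x = v₂ x) → evalT I v₁ t = evalT I v₂ t
  | Term.var x, v₁, v₂, h => by simpa [evalT] using h x .here
  | Term.app f ts, v₁, v₂, h => by
      rw [evalT_app, evalT_app]
      exact congrArg _ (List.map_congr_left fun t ht =>
        evalT_congr I t v₁ v₂ fun x hx => h x (.arg ht hx))
decreasing_by
  have := List.sizeOf_lt_of_mem ht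
  simp only [Term.app.sizeOf_spec] at *
  omega

theorem evalT_subst (I : Interp F) (σ : V → Term F V) :
    ∀ (t : Term F V) (w : V → I.D),
      evalT I w (applySubst σ t) = evalT I (fun z => evalT I w (σ z)) t
  | Term.var x, w => by simp [applySubst, evalT]
  | Term.app f ts, w => by
      rw [applySubst_app, evalT_app, evalT_app, List.map_map]
      exact congrArg _ (List.map_congr_left fun t ht => evalT_subst I σ t w)
decreasing_by
  have := List.sizeOf_lt_of_mem ht
  simp only [Term.app.sizeOf_spec] at *
  omega

theorem sat_applyFml [DecidableEq V] (I : Interp F) (φ : Fml F V) :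
    ∀ (σ : V → Term F V), (∀ z, σ z = Term.var z ∨ ∀ x, ¬ VarInT x (σ z)) →
    ∀ (w : V → I.D), Sat I w (applyFml σ φ) ↔ Sat I (fun z => evalT I w (σ z)) φ := by
  induction φ with
  | eq s t =>
      intro σ hσ w
      simp only [applyFml, Sat, evalT_subst]
  | not φ ih =>
      intro σ hσ w
      simp only [applyFml, Sat]
      exact not_congr (ih σ hσ w)
  | and φ ψ ih1 ih2 =>
      intro σ hσ w
      simp only [applyFml, Sat]
      exact and_congr (ih1 σ hσ w) (ih2 σ hσ w)
  | or φ ψ ih1 ih2 =>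
      intro σ hσ w
      simp only [applyFml, Sat]
      exact or_congr (ih1 σ hσ w) (ih2 σ hσ w)
  | imp φ ψ ih1 ih2 =>
      intro σ hσ w
      simp only [applyFml, Sat]
      exact imp_congr (ih1 σ hσ w) (ih2 σ hσ w)
  | all x φ ih =>
      intro σ hσ w
      have hσ' : ∀ z, Function.update σ x (Term.var x) z = Term.var z ∨
          ∀ x', ¬ VarInT x' (Function.update σ x (Term.var x) z) := by
        intro z
        by_cases hz : z = x
        · subst hz; left; simp
        · rw [Function.update_of_ne hz]; exact hσ z
      have key : ∀ d : I.D,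
          (fun z => evalT I (Function.update w x d) (Function.update σ x (Term.var x) z))
            = Function.update (fun z => evalT I w (σ z)) x d := by
        intro d
        funext z
        by_cases hz : z = x
        · subst hz; simp [evalT]
        · rw [Function.update_of_ne hz, Function.update_of_ne hz]
          rcases hσ z with h | h
          · rw [h]; simp [evalT, Function.update_of_ne hz]
          · exact evalT_congr I _ _ _ fun x' hx' => absurd hx' (h x')
      simp only [applyFml, Sat]
      refine forall_congr' fun d => ?_
      rw [ih _ hσ' (Function.update w x d), key d]
  | ex x φ ih =>
      intro σ hσ w
      have hσ' : ∀ z, Function.update σ x (Term.var x) z = Term.var z ∨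
          ∀ x', ¬ VarInT x' (Function.update σ x (Term.var x) z) := by
        intro z
        by_cases hz : z = x
        · subst hz; left; simp
        · rw [Function.update_of_ne hz]; exact hσ z
      have key : ∀ d : I.D,
          (fun z => evalT I (Function.update w x d) (Function.update σ x (Term.var x) z))
            = Function.update (fun z => evalT I w (σ z)) x d := by
        intro d
        funext z
        by_cases hz : z = x
        · subst hz; simp [evalT]
        · rw [Function.update_of_ne hz, Function.update_of_ne hz]
          rcases hσ z with h | h
          · rw [h]; simp [evalT, Function.update_of_ne hz]
          · exact evalT_congr I _ _ _ fun x' hx' => absurd hx' (h x')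
      simp only [applyFml, Sat]
      refine exists_congr fun d => ?_
      rw [ih _ hσ' (Function.update w x d), key d]

/-- Interpretation which reinterprets each Skolem constant `αᵢ` as `v xᵢ`. -/
abbrev skInterp [DecidableEq F] (I : Interp F) (ps : List (V × F)) (v : V → I.D) :
    Interp F where
  D := I.D
  default := I.default
  fn := fun f args =>
    match args, ps.find? (fun q => decide (q.2 = f)) with
    | [], some q => v q.1
    | _, _ => I.fn f args

theorem skInterp_fn_nil_some [DecidableEq F] (I : Interp F) (ps : List (V × F))
    (v : V → I.D) {f : F} {q : V × F}
    (h : ps.find? (fun q => decide (q.2 = f)) = some q) :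
    (skInterp I ps v).fn f [] = v q.1 := by
  simp [skInterp, h]

theorem skInterp_fn_nil_none [DecidableEq F] (I : Interp F) (ps : List (V × F))
    (v : V → I.D) {f : F}
    (h : ps.find? (fun q => decide (q.2 = f)) = none) :
    (skInterp I ps v).fn f [] = I.fn f [] := by
  simp [skInterp, h]

theorem skInterp_fn_cons [DecidableEq F] (I : Interp F) (ps : List (V × F))
    (v : V → I.D) (f : F) (d : I.D) (ds : List I.D) :
    (skInterp I ps v).fn f (d :: ds) = I.fn f (d :: ds) := by
  rcases h : ps.find? (fun q => decide (q.2 = f)) with _ | q <;> simp [skInterp, h]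

theorem skInterp_fn_none [DecidableEq F] (I : Interp F) (ps : List (V × F))
    (v : V → I.D) {f : F}
    (h : ps.find? (fun q => decide (q.2 = f)) = none) (args : List I.D) :
    (skInterp I ps v).fn f args = I.fn f args := by
  cases args with
  | nil => exact skInterp_fn_nil_none I ps v h
  | cons d ds => exact skInterp_fn_cons I ps v f d ds

theorem evalT_skInterp_unskolem [DecidableEq F] (I : Interp F) (ps : List (V × F))
    (v : V → I.D) :
    ∀ t : Term F V, evalT (skInterp I ps v) v t = evalT I v (unskolemT ps t)
  | Term.var z => by simp [evalT, unskolemT]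
  | Term.app f [] => by
      rw [evalT_app]
      rcases h : ps.find? (fun q => decide (q.2 = f)) with _ | q
      · rw [List.map_nil, skInterp_fn_nil_none I ps v h]
        simp [unskolemT, h, evalT_app]
      · rw [List.map_nil, skInterp_fn_nil_some I ps v h]
        simp [unskolemT, h, evalT]
  | Term.app f (t :: ts) => by
      have hu : unskolemT ps (Term.app f (t :: ts))
          = Term.app f ((t :: ts).map (unskolemT ps)) := by
        rw [unskolemT] <;> simp
      rw [hu, evalT_app, evalT_app, List.map_map, List.map_cons, skInterp_fn_cons,
        ← List.map_cons]
      exact congrArg _ (List.map_congr_left fun s hs =>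
        evalT_skInterp_unskolem I ps v s)
decreasing_by
  have := List.sizeOf_lt_of_mem hs
  simp only [Term.app.sizeOf_spec] at *
  omega

theorem evalT_skInterp_fresh [DecidableEq F] (I : Interp F) (ps : List (V × F))
    (v : V → I.D) :
    ∀ t : Term F V, (∀ q ∈ ps, ¬ SymInT q.2 t) →
      ∀ w : V → I.D, evalT (skInterp I ps v) w t = evalT I w t
  | Term.var z, _, w => by simp [evalT]
  | Term.app f ts, h, w => by
      rw [evalT_app, evalT_app]
      have hn : ps.find? (fun q => decide (q.2 = f)) = none := by
        rcases hf : ps.find? (fun q => decide (q.2 = f)) with _ | q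
        · exact hf
        · have hq : q ∈ ps := List.mem_of_find?_eq_some hf
          have hq2 : q.2 = f := by simpa using List.find?_some hf
          exact absurd (hq2 ▸ SymInT.here) (h q hq)
      rw [skInterp_fn_none I ps v hn]
      exact congrArg _ (List.map_congr_left fun s hs =>
        evalT_skInterp_fresh I ps v s (fun q hq hsym => h q hq (.arg hs hsym)) w)
decreasing_by
  have := List.sizeOf_lt_of_mem hs
  simp only [Term.app.sizeOf_spec] at *
  omega

theorem evalP_skInterp [DecidableEq F] (I : Interp F) (ps : List (V × F))
    (v : V → I.D) (p : PTerm F V) :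
    evalP (skInterp I ps v) v p = evalP I v (unskolemP ps p) := by
  induction p with
  | t u => simp [evalP, unskolemP, evalT_skInterp_unskolem]
  | ite l r p q ihp ihq =>
      simp only [evalP, unskolemP, ihp, ihq]
      rw [evalT_skInterp_unskolem I ps v l, evalT_skInterp_unskolem I ps v r]

theorem Sat_skInterp [DecidableEq V] [DecidableEq F] (I : Interp F)
    (ps : List (V × F)) (v : V → I.D) (φ : Fml F V)
    (h : ∀ q ∈ ps, ¬ SymInFml q.2 φ) :
    ∀ w : V → I.D, Sat (skInterp I ps v) w φ ↔ Sat I w φ := by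
  induction φ with
  | eq s t =>
      intro w
      have hs : ∀ q ∈ ps, ¬ SymInT q.2 s := fun q hq hh => h q hq (Or.inl hh)
      have ht : ∀ q ∈ ps, ¬ SymInT q.2 t := fun q hq hh => h q hq (Or.inr hh)
      simp only [Sat, evalT_skInterp_fresh I ps v s hs, evalT_skInterp_fresh I ps v t ht]
  | not φ ih =>
      intro w
      simp only [Sat]
      exact not_congr (ih (fun q hq hh => h q hq hh) w)
  | and φ ψ ih1 ih2 =>
      intro w
      simp only [Sat]
      exact and_congr (ih1 (fun q hq hh => h q hq (Or.inl hh)) w)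
        (ih2 (fun q hq hh => h q hq (Or.inr hh)) w)
  | or φ ψ ih1 ih2 =>
      intro w
      simp only [Sat]
      exact or_congr (ih1 (fun q hq hh => h q hq (Or.inl hh)) w)
        (ih2 (fun q hq hh => h q hq (Or.inr hh)) w)
  | imp φ ψ ih1 ih2 =>
      intro w
      simp only [Sat]
      exact imp_congr (ih1 (fun q hq hh => h q hq (Or.inl hh)) w)
        (ih2 (fun q hq hh => h q hq (Or.inr hh)) w)
  | all x φ ih =>
      intro w
      simp only [Sat]
      exact forall_congr' fun d => ih (fun q hq hh => h q hq hh) (Function.update w x d)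
  | ex x φ ih =>
      intro w
      simp only [Sat]
      exact exists_congr fun d => ih (fun q hq hh => h q hq hh) (Function.update w x d)

end AuxLemmas

/-- Soundness of saturation implies solution extraction:
let `Fm = F[x̄, y]` be the specification formula, `ps` the list of pairs
`(xᵢ, αᵢ)` of input variables and their fresh Skolem constants (the `αᵢ` are
distinct and do not occur in `Fm`), and let `FmA = F[ᾱ, y]`. If every answer
clause in the initial set `S0` is valid and every inference of `Inf` preserves
validity (both w.r.t. `FmA`), and saturation derives the answer clause
`□ ◦ ⟨p[ᾱ]⟩`, then `∀x̄. F[x̄, p[x̄]]` is valid, i.e. `p[x̄]` is a solution. -/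
theorem saturation_solution_sound {F V : Type} [DecidableEq V] [DecidableEq F]
    (Fm : Fml F V) (y : V) (ps : List (V × F))
    (hxs : (ps.map Prod.fst).Nodup) (has : (ps.map Prod.snd).Nodup)
    (hy : y ∉ ps.map Prod.fst)
    (hfresh : ∀ q ∈ ps, ¬ SymInFml q.2 Fm)
    (S0 : Set (AnsClause F V))
    (Inf : List (AnsClause F V) → AnsClause F V → Prop)
    (h0 : ∀ a ∈ S0, ValidA (applyFml (substOfPairs ps) Fm) y a)
    (hInf : ∀ prems c, Inf prems c →
      (∀ a ∈ prems, ValidA (applyFml (substOfPairs ps) Fm) y a) →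
      ValidA (applyFml (substOfPairs ps) Fm) y c)
    (p : PTerm F V)
    (hder : Derives S0 Inf (([] : Clause F V), p)) :
    ∀ (I : Interp F) (v : V → I.D),
      Sat I (Function.update v y (evalP I v (unskolemP ps p))) Fm := by
  have hval : ∀ a, Derives S0 Inf a → ValidA (applyFml (substOfPairs ps) Fm) y a := by
    intro a hd
    induction hd with
    | base h => exact h0 _ h
    | step hp hi ih => exact hInf _ _ hi ih
  intro I v
  have h1 := hval _ hder (skInterp I ps v) v
  rcases h1 with hc | hs0
  · exact absurd hc (by simp [clauseSat])
  · have hs : Sat (skInterp I ps v)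
        (Function.update v y (evalP (skInterp I ps v) v p))
        (applyFml (substOfPairs ps) Fm) := hs0
    have hgood : ∀ z, substOfPairs ps z = Term.var z ∨
        ∀ x, ¬ VarInT x (substOfPairs ps z) := by
      intro z
      unfold substOfPairs
      rcases h : ps.find? (fun q => decide (q.1 = z)) with _ | q
      · left; simp only [h]
      · right
        simp only [h]
        intro x hx
        cases hx with
        | arg hmem _ => exact absurd hmem List.not_mem_nil
    have h2 := (sat_applyFml (skInterp I ps v) Fm (substOfPairs ps) hgood _).mp hs
    have hasg : (fun z => evalT (skInterp I ps v)
        (Function.update v y (evalP (skInterp I ps v) v p)) (substOfPairs ps z))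
        = Function.update v y (evalP (skInterp I ps v) v p) := by
      funext z
      unfold substOfPairs
      rcases h : ps.find? (fun q => decide (q.1 = z)) with _ | q
      · simp only [h]; simp [evalT]
      · simp only [h]
        have hq : q ∈ ps := List.mem_of_find?_eq_some h
        have hq1 : q.1 = z := by simpa using List.find?_some h
        have hzy : z ≠ y := by
          intro hzy
          exact hy (hzy ▸ hq1 ▸ List.mem_map_of_mem (f := Prod.fst) hq)
        rcases h2' : ps.find? (fun r => decide (r.2 = q.2)) with _ | q'
        · rw [List.find?_eq_none] at h2'
          exact absurd (by simp : decide (q.2 = q.2) = true) (h2' q hq)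
        · have hq' : q' ∈ ps := List.mem_of_find?_eq_some h2'
          have hq'2 : q'.2 = q.2 := by simpa using List.find?_some h2'
          have hqq : q' = q := List.inj_on_of_nodup_map has hq' hq hq'2
          rw [evalT_app, List.map_nil, skInterp_fn_nil_some I ps v h2', hqq, hq1,
            Function.update_of_ne hzy]
    rw [hasg] at h2
    have h3 := (Sat_skInterp I ps v Fm hfresh _).mp h2
    rwa [evalP_skInterp] at h3
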